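/- Main theorem: Let H = (H, α, β, Δ, ε, S) be a left Hopf R-algebroid with invertible antipode S and F ∈ H⊗_R H an invertible counital 2-cocycle such that V_F = (SF¹)F² is invertible in H. Then S_F : h ↦ V_F⁻¹(Sh)V_F is an invertible antipode for the twisted R_F-bialgebroid H_F = (H, α_F, β_F, Δ_F, ε_F), with inverse S_F⁻¹ : h ↦ (S⁻¹V_F⁻¹)(S⁻¹h)(S⁻¹V_F). -/

import Mathlib

open TensorProduct

noncomputable section Bialgebroid

variable (k R H : Type*) [CommRing k] [Ring R] [Ring H] [Algebra k R] [Algebra k H]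

/-- Data of a left `R`-bialgebroid over `k`, with a chosen `k`-linear lift
`Δ : H → H ⊗ₖ H` of the comultiplication `H → H ⊗_R H`. -/
structure BgdCore where
  /-- the source map -/
  α : R →ₐ[k] H
  /-- the target map (an algebra antihomomorphism) -/
  β : R →ₗ[k] H
  β_one : β 1 = 1
  β_mul : ∀ r s : R, β (r * s) = β s * β r
  αβ_comm : ∀ r s : R, α r * β s = β s * α r
  /-- lift of the comultiplication -/
  Δ : H →ₗ[k] H ⊗[k] H
  /-- the counit -/
  ε : H →ₗ[k] R

variable {k R H}

namespace BgdCore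

/-- kernel of `H ⊗ₖ H ⊗ₖ H → H ⊗ H ⊗ H` over the base, for general
source/target maps `a`, `b`. -/
def iR3g (a b : R → H) : Submodule k ((H ⊗[k] H) ⊗[k] H) :=
  Submodule.span k
    ({x | ∃ (r : R) (g g' g'' : H),
        x = ((b r * g) ⊗ₜ[k] g') ⊗ₜ[k] g'' - (g ⊗ₜ[k] (a r * g')) ⊗ₜ[k] g''} ∪
     {x | ∃ (r : R) (g g' g'' : H),
        x = (g ⊗ₜ[k] (b r * g')) ⊗ₜ[k] g'' - (g ⊗ₜ[k] g') ⊗ₜ[k] (a r * g'')})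

variable (D : BgdCore k R H)

/-- `I_R`, the kernel of the projection `H ⊗ₖ H → H ⊗_R H`. -/
def iR : Submodule k (H ⊗[k] H) :=
  Submodule.span k
    {x | ∃ (r : R) (g g' : H), x = (D.β r * g) ⊗ₜ[k] g' - g ⊗ₜ[k] (D.α r * g')}

/-- kernel of `H ⊗ₖ H ⊗ₖ H → H ⊗_R H ⊗_R H`. -/
def iR3 : Submodule k ((H ⊗[k] H) ⊗[k] H) :=
  iR3g (fun r => D.α r) (fun r => D.β r)

/-- `x ⊗ y ↦ α(ε x) * y`, realizing the left counit constraint. -/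
def counitL : H ⊗[k] H →ₗ[k] H :=
  LinearMap.mul' k H ∘ₗ TensorProduct.map (D.α.toLinearMap ∘ₗ D.ε) LinearMap.id

/-- `x ⊗ y ↦ β(ε y) * x`, realizing the right counit constraint. -/
def counitR : H ⊗[k] H →ₗ[k] H :=
  LinearMap.mul' k H ∘ₗ TensorProduct.map (D.β ∘ₗ D.ε) LinearMap.id
    ∘ₗ (TensorProduct.comm k H H).toLinearMap

end BgdCore

variable (k R H) in
/-- A left `R`-bialgebroid; identities involving `H ⊗_R H` are stated for the
chosen lifts modulo the ideal `I_R`. -/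
structure LeftBialgebroid extends BgdCore k R H where
  εα : ∀ r : R, ε (α r) = r
  εβ : ∀ r : R, ε (β r) = r
  ε_lmul : ∀ (r : R) (h : H), ε (α r * h) = r * ε h
  ε_rmul : ∀ (r : R) (h : H), ε (β r * h) = ε h * r
  ε_weakmul : ∀ g h : H, ε (g * h) = ε (g * α (ε h))
  counit_left : ∀ h : H, toBgdCore.counitL (Δ h) = h
  counit_right : ∀ h : H, toBgdCore.counitR (Δ h) = h
  Δ_one : Δ 1 - 1 ∈ toBgdCore.iR
  Δ_mul : ∀ g h : H, Δ (g * h) - Δ g * Δ h ∈ toBgdCore.iR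
  Δ_bimod : ∀ (a b : R) (h : H),
    Δ (α a * (β b * h)) - (α a ⊗ₜ[k] β b) * Δ h ∈ toBgdCore.iR
  Δ_ideal : ∀ h : H, ∀ x ∈ toBgdCore.iR, Δ h * x ∈ toBgdCore.iR
  coassoc : ∀ h : H,
    (TensorProduct.map Δ LinearMap.id) (Δ h)
      - (TensorProduct.assoc k H H H).symm ((TensorProduct.map LinearMap.id Δ) (Δ h))
      ∈ toBgdCore.iR3

/-- `x ⊗ y ↦ (Dl(T x) * C) * (y ⊗ 1)`; Sweedler: `(Tx)₍₁₎C¹y ⊗ (Tx)₍₂₎C²`. -/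
def sandL (Dl : H →ₗ[k] H ⊗[k] H) (T : H →ₗ[k] H) (C : H ⊗[k] H) :
    H ⊗[k] H →ₗ[k] H ⊗[k] H :=
  LinearMap.mul' k (H ⊗[k] H) ∘ₗ
    TensorProduct.map (LinearMap.mulRight k C ∘ₗ Dl ∘ₗ T) ((TensorProduct.mk k H H).flip 1)

/-- `x ⊗ y ↦ (Dl(T y) * C) * (1 ⊗ x)`. -/
def sandR (Dl : H →ₗ[k] H ⊗[k] H) (T : H →ₗ[k] H) (C : H ⊗[k] H) :
    H ⊗[k] H →ₗ[k] H ⊗[k] H :=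
  LinearMap.mul' k (H ⊗[k] H) ∘ₗ
    TensorProduct.map (LinearMap.mulRight k C ∘ₗ Dl ∘ₗ T) (TensorProduct.mk k H H 1)
    ∘ₗ (TensorProduct.comm k H H).toLinearMap

/-- `(x ⊗ y) ⊗ z ↦ Dl(T x) * (y ⊗ z)`, lift of the map `δ_S`. -/
def trimapL (Dl : H →ₗ[k] H ⊗[k] H) (T : H →ₗ[k] H) :
    (H ⊗[k] H) ⊗[k] H →ₗ[k] H ⊗[k] H :=
  LinearMap.mul' k (H ⊗[k] H) ∘ₗ TensorProduct.map (Dl ∘ₗ T) LinearMap.id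
    ∘ₗ (TensorProduct.assoc k H H H).toLinearMap

/-- `(x ⊗ y) ⊗ z ↦ Dl(T z) * (x ⊗ y)`, lift of the map `δ_{S⁻¹}`. -/
def trimapR (Dl : H →ₗ[k] H ⊗[k] H) (T : H →ₗ[k] H) :
    (H ⊗[k] H) ⊗[k] H →ₗ[k] H ⊗[k] H :=
  LinearMap.mul' k (H ⊗[k] H) ∘ₗ TensorProduct.map (Dl ∘ₗ T) LinearMap.id
    ∘ₗ (TensorProduct.comm k (H ⊗[k] H) H).toLinearMap

/-- `V`-element: for `F = F¹ ⊗ F²` this is `(T F¹) F²`. -/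
def Vof (T : H →ₗ[k] H) (F : H ⊗[k] H) : H :=
  LinearMap.mul' k H ((TensorProduct.map T LinearMap.id) F)

/-- conjugated map `h ↦ a * (T h) * b`. -/
def SFmap (T : H →ₗ[k] H) (a b : H) : H →ₗ[k] H :=
  LinearMap.mulLeft k a ∘ₗ LinearMap.mulRight k b ∘ₗ T

/-- A Böhm–Szlachányi invertible antipode for a left bialgebroid. -/
structure BSAntipode (B : LeftBialgebroid k R H) where
  /-- the antipode -/
  S : H →ₗ[k] H
  /-- its inverse -/
  Sinv : H →ₗ[k] H
  S_Sinv : ∀ h : H, S (Sinv h) = h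
  Sinv_S : ∀ h : H, Sinv (S h) = h
  S_one : S 1 = 1
  S_antimul : ∀ g h : H, S (g * h) = S h * S g
  Sβ : ∀ r : R, S (B.toBgdCore.β r) = B.toBgdCore.α r
  Sinvα : ∀ r : R, Sinv (B.toBgdCore.α r) = B.toBgdCore.β r
  left_axiom : ∀ h : H,
    sandL B.toBgdCore.Δ S 1 (B.toBgdCore.Δ h) - (1 : H) ⊗ₜ[k] S h ∈ B.toBgdCore.iR
  right_axiom : ∀ h : H,
    sandR B.toBgdCore.Δ Sinv 1 (B.toBgdCore.Δ h) - (Sinv h) ⊗ₜ[k] (1 : H) ∈ B.toBgdCore.iR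

/-- A Drinfeld–Xu invertible counital 2-cocycle. -/
structure DXCocycle (B : LeftBialgebroid k R H) where
  /-- a lift of the 2-cocycle -/
  F : H ⊗[k] H
  /-- a lift of its inverse -/
  Fbar : H ⊗[k] H
  counital_l : B.toBgdCore.counitL F = 1
  counital_r : B.toBgdCore.counitR F = 1
  cocycle :
    (TensorProduct.map B.toBgdCore.Δ LinearMap.id) F * (F ⊗ₜ[k] (1 : H))
      - (TensorProduct.assoc k H H H).symm ((TensorProduct.map LinearMap.id B.toBgdCore.Δ) F)
        * (TensorProduct.assoc k H H H).symm ((1 : H) ⊗ₜ[k] F) ∈ B.toBgdCore.iR3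
  inv_right : F * Fbar - 1 ∈ B.toBgdCore.iR
  inv_left : Fbar * F - 1 ∈ Submodule.map (LinearMap.mulLeft k Fbar) B.toBgdCore.iR

namespace DXCocycle

variable {B : LeftBialgebroid k R H} (C : DXCocycle B)

/-- twisted source `α_F(r) = α(F¹ ▷ r) F²`. -/
def alphaF (r : R) : H :=
  B.toBgdCore.counitL (C.F * (B.toBgdCore.α r ⊗ₜ[k] (1 : H)))

/-- twisted target `β_F(r) = β(F² ▷ r) F¹`. -/
def betaF (r : R) : H :=
  B.toBgdCore.counitR (C.F * ((1 : H) ⊗ₜ[k] B.toBgdCore.α r))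

/-- `I_{R_F} = F⁻¹ I_R`, the kernel of `H ⊗ₖ H → H ⊗_{R_F} H`. -/
def iRF : Submodule k (H ⊗[k] H) :=
  Submodule.map (LinearMap.mulLeft k C.Fbar) B.toBgdCore.iR

/-- lift of the twisted comultiplication `Δ_F(h) = F⁻¹ Δ(h) F`. -/
def ΔF : H →ₗ[k] H ⊗[k] H :=
  LinearMap.mulLeft k C.Fbar ∘ₗ LinearMap.mulRight k C.F ∘ₗ B.toBgdCore.Δ

/-- `α_F` as a linear map. -/
def alphaFlin : R →ₗ[k] H :=
  B.toBgdCore.counitL ∘ₗ LinearMap.mulLeft k C.F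
    ∘ₗ (TensorProduct.mk k H H).flip 1 ∘ₗ B.toBgdCore.α.toLinearMap

/-- `β_F` as a linear map. -/
def betaFlin : R →ₗ[k] H :=
  B.toBgdCore.counitR ∘ₗ LinearMap.mulLeft k C.F
    ∘ₗ TensorProduct.mk k H H 1 ∘ₗ B.toBgdCore.α.toLinearMap

/-- left counit constraint of the twisted bialgebroid. -/
def counitLF : H ⊗[k] H →ₗ[k] H :=
  LinearMap.mul' k H ∘ₗ TensorProduct.map (C.alphaFlin ∘ₗ B.toBgdCore.ε) LinearMap.id

/-- right counit constraint of the twisted bialgebroid. -/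
def counitRF : H ⊗[k] H →ₗ[k] H :=
  LinearMap.mul' k H ∘ₗ TensorProduct.map (C.betaFlin ∘ₗ B.toBgdCore.ε) LinearMap.id
    ∘ₗ (TensorProduct.comm k H H).toLinearMap

end DXCocycle

end Bialgebroid

variable {k R H : Type*} [CommRing k] [Ring R] [Ring H] [Algebra k R] [Algebra k H]

/-! All identities below are congruences, expressed with `SModEq`, modulo the kernels
`I_R = B.iR` of `H ⊗ₖ H → H ⊗_R H` and `I_{R_F} = C.iRF = F⁻¹ I_R` of `H ⊗ₖ H → H ⊗_{R_F} H`.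

Evaluating the cocycle identity along `x ⊗ y ⊗ z ↦ x ⊗ α(ε(y α(t))) z` gives
`F (β_F(t) ⊗ 1) ≡ F (1 ⊗ α_F(t))`; applying `x ⊗ y ↦ S(x) y` turns this into
`S(β_F t) V = V α_F(t)`, i.e. `S_F ∘ β_F = α_F`. Evaluating it along `x ⊗ y ⊗ z ↦ Δ(S x) (y ⊗ z)`
gives `Δ(V) F ≡ Δ(S F¹) (F² ⊗ V)`; with the antipode axiom of `H` this cancels the factors
`F⁻¹ ⋯ F` of `Δ_F` against `V⁻¹ ⋯ V` of `S_F`, which is the left antipode axiom of `H_F`.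
The right antipode axiom of `H_F` is the left one of the co-opposite Hopf algebroid (over `Rᵐᵒᵖ`,
source and target exchanged, coproduct flipped, antipode `S⁻¹`) twisted by the flipped cocycle. -/

open Algebra.TensorProduct (tmul_mul_tmul)

theorem TensorProduct.assoc_mul (w w' : (H ⊗[k] H) ⊗[k] H) :
    TensorProduct.assoc k H H H (w * w')
      = TensorProduct.assoc k H H H w * TensorProduct.assoc k H H H w' :=
  map_mul (Algebra.TensorProduct.assoc k k k H H H) w w'

theorem TensorProduct.assoc_symm_mul (w w' : H ⊗[k] (H ⊗[k] H)) :
    (TensorProduct.assoc k H H H).symm (w * w')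
      = (TensorProduct.assoc k H H H).symm w * (TensorProduct.assoc k H H H).symm w' :=
  map_mul (Algebra.TensorProduct.assoc k k k H H H).symm w w'

theorem TensorProduct.comm_mul (u v : H ⊗[k] H) :
    TensorProduct.comm k H H (u * v) = TensorProduct.comm k H H u * TensorProduct.comm k H H v :=
  map_mul (Algebra.TensorProduct.comm k H H) u v

@[simp] theorem TensorProduct.comm_one : TensorProduct.comm k H H 1 = 1 :=
  map_one (Algebra.TensorProduct.comm k H H)

namespace BgdCore

variable (D : BgdCore k R H)

theorem tmul_sModEq_iR (r : R) (g g' : H) :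
    (D.β r * g) ⊗ₜ[k] g' ≡ g ⊗ₜ[k] (D.α r * g') [SMOD D.iR] :=
  SModEq.sub_mem.mpr (Submodule.subset_span ⟨r, g, g', rfl⟩)

theorem iR_le_comap {P : Type*} [AddCommGroup P] [Module k P] (L : H ⊗[k] H →ₗ[k] P)
    (Q : Submodule k P) (h : ∀ r g g', L ((D.β r * g) ⊗ₜ[k] g') - L (g ⊗ₜ[k] (D.α r * g')) ∈ Q) :
    D.iR ≤ Q.comap L :=
  Submodule.span_le.mpr fun _ ⟨r, g, g', hx⟩ => by simpa [hx] using h r g g'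

theorem iR3_le_comap {P : Type*} [AddCommGroup P] [Module k P]
    (L : (H ⊗[k] H) ⊗[k] H →ₗ[k] P) (Q : Submodule k P)
    (h₁ : ∀ r g g' g'', L (((D.β r * g) ⊗ₜ[k] g') ⊗ₜ[k] g'')
      - L ((g ⊗ₜ[k] (D.α r * g')) ⊗ₜ[k] g'') ∈ Q)
    (h₂ : ∀ r g g' g'', L ((g ⊗ₜ[k] (D.β r * g')) ⊗ₜ[k] g'')
      - L ((g ⊗ₜ[k] g') ⊗ₜ[k] (D.α r * g'')) ∈ Q) :
    D.iR3 ≤ Q.comap L := by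
  refine Submodule.span_le.mpr ?_
  rintro _ (⟨r, g, g', g'', rfl⟩ | ⟨r, g, g', g'', rfl⟩)
  · simpa using h₁ r g g' g''
  · simpa using h₂ r g g' g''

theorem iR_le_comap_mulRight (v : H ⊗[k] H) : D.iR ≤ D.iR.comap (LinearMap.mulRight k v) := by
  refine D.iR_le_comap _ _ fun r g g' => ?_
  induction v using TensorProduct.induction_on with
  | zero => simp
  | tmul a b =>
    simpa [tmul_mul_tmul, mul_assoc] using SModEq.sub_mem.mp (D.tmul_sModEq_iR r (g * a) (g' * b))
  | add v w hv hw => simpa [mul_add, add_sub_add_comm] using add_mem hv hw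

theorem sModEq_mul_right {u v : H ⊗[k] H} (h : u ≡ v [SMOD D.iR]) (w : H ⊗[k] H) :
    u * w ≡ v * w [SMOD D.iR] :=
  SModEq.sub_mem.mpr (by simpa [sub_mul] using D.iR_le_comap_mulRight w (SModEq.sub_mem.mp h))

theorem iR_le_comap_mulLeft_source (r : R) :
    D.iR ≤ D.iR.comap (LinearMap.mulLeft k (D.α r ⊗ₜ[k] (1 : H))) := by
  refine D.iR_le_comap _ _ fun s g g' => ?_
  have hcomm : D.α r * (D.β s * g) = D.β s * (D.α r * g) := by
    rw [← mul_assoc, D.αβ_comm, mul_assoc]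
  simpa [tmul_mul_tmul, hcomm] using SModEq.sub_mem.mp (D.tmul_sModEq_iR s (D.α r * g) g')

theorem iR_le_comap_mulLeft_target (r : R) :
    D.iR ≤ D.iR.comap (LinearMap.mulLeft k ((1 : H) ⊗ₜ[k] D.β r)) := by
  refine D.iR_le_comap _ _ fun s g g' => ?_
  have hcomm : D.β r * (D.α s * g') = D.α s * (D.β r * g') := by
    rw [← mul_assoc, ← D.αβ_comm, mul_assoc]
  simpa [tmul_mul_tmul, hcomm] using SModEq.sub_mem.mp (D.tmul_sModEq_iR s g (D.β r * g'))

theorem iR3_le_comap_mulRight (a b c : H) :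
    D.iR3 ≤ D.iR3.comap (LinearMap.mulRight k ((a ⊗ₜ[k] b) ⊗ₜ[k] c)) := by
  refine D.iR3_le_comap _ _ (fun r g g' g'' => ?_) fun r g g' g'' => ?_
  · refine Submodule.subset_span (Or.inl ⟨r, g * a, g' * b, g'' * c, ?_⟩)
    simp [tmul_mul_tmul, mul_assoc]
  · refine Submodule.subset_span (Or.inr ⟨r, g * a, g' * b, g'' * c, ?_⟩)
    simp [tmul_mul_tmul, mul_assoc]

@[simp] theorem counitL_tmul (x y : H) : D.counitL (x ⊗ₜ[k] y) = D.α (D.ε x) * y := by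
  simp [counitL]

@[simp] theorem counitR_tmul (x y : H) : D.counitR (x ⊗ₜ[k] y) = D.β (D.ε y) * x := by
  simp [counitR]

end BgdCore

namespace LeftBialgebroid

variable (B : LeftBialgebroid k R H)

theorem Δ_mul_sModEq (g h : H) : B.Δ (g * h) ≡ B.Δ g * B.Δ h [SMOD B.iR] :=
  SModEq.sub_mem.mpr (B.Δ_mul g h)

theorem Δ_one_sModEq : B.Δ 1 ≡ 1 [SMOD B.iR] :=
  SModEq.sub_mem.mpr B.Δ_one

theorem sModEq_Δ_mul {u v : H ⊗[k] H} (h : u ≡ v [SMOD B.iR]) (x : H) :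
    B.Δ x * u ≡ B.Δ x * v [SMOD B.iR] :=
  SModEq.sub_mem.mpr (by simpa [mul_sub] using B.Δ_ideal x _ (SModEq.sub_mem.mp h))

theorem Δ_mul_sModEq_of_Δ_sModEq {x : H} {X : H ⊗[k] H} (h : B.Δ x ≡ X [SMOD B.iR]) (w : H) :
    B.Δ (w * x) ≡ B.Δ w * X [SMOD B.iR] :=
  (B.Δ_mul_sModEq w x).trans (B.sModEq_Δ_mul h w)

theorem Δ_source (r : R) : B.Δ (B.α r) ≡ B.α r ⊗ₜ[k] (1 : H) [SMOD B.iR] := by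
  have h := SModEq.sub_mem.mpr (B.Δ_bimod r 1 1)
  rw [B.β_one, one_mul, mul_one] at h
  refine h.trans (SModEq.sub_mem.mpr ?_)
  simpa [mul_sub] using B.iR_le_comap_mulLeft_source r B.Δ_one

theorem Δ_target (r : R) : B.Δ (B.β r) ≡ (1 : H) ⊗ₜ[k] B.β r [SMOD B.iR] := by
  have h := SModEq.sub_mem.mpr (B.Δ_bimod 1 r 1)
  rw [map_one, one_mul, mul_one] at h
  refine h.trans (SModEq.sub_mem.mpr ?_)
  simpa [mul_sub] using B.iR_le_comap_mulLeft_target r B.Δ_one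

theorem counitL_congr {u v : H ⊗[k] H} (h : u ≡ v [SMOD B.iR]) :
    B.counitL u = B.counitL v := by
  have hle : B.iR ≤ (⊥ : Submodule k H).comap B.counitL :=
    B.iR_le_comap _ _ fun r g g' => by simp [B.ε_rmul, mul_assoc]
  simpa [sub_eq_zero] using hle (SModEq.sub_mem.mp h)

theorem counitR_congr {u v : H ⊗[k] H} (h : u ≡ v [SMOD B.iR]) :
    B.counitR u = B.counitR v := by
  have hle : B.iR ≤ (⊥ : Submodule k H).comap B.counitR :=
    B.iR_le_comap _ _ fun r g g' => by simp [B.ε_lmul, B.β_mul, mul_assoc]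
  simpa [sub_eq_zero] using hle (SModEq.sub_mem.mp h)

theorem ε_mul_target (g h : H) : B.ε (g * B.β (B.ε h)) = B.ε (g * h) := by
  rw [B.ε_weakmul, B.εβ, ← B.ε_weakmul]

theorem counitL_Δ_mul (y : H) (v : H ⊗[k] H) : B.counitL (B.Δ y * v) = y * B.counitL v := by
  induction v using TensorProduct.induction_on with
  | zero => simp
  | add v w hv hw => simp only [mul_add, map_add, hv, hw]
  | tmul a b =>
    have hweak : ∀ u : H ⊗[k] H,
        B.counitL (u * (a ⊗ₜ[k] b)) = B.counitL (u * (B.α (B.ε a) ⊗ₜ[k] (1 : H))) * b := by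
      intro u
      induction u using TensorProduct.induction_on with
      | zero => simp
      | add u w hu hw => simp only [add_mul, map_add, hu, hw]
      | tmul x z => simp [tmul_mul_tmul, mul_assoc, B.ε_weakmul x a]
    rw [hweak, B.counitL_congr (B.Δ_mul_sModEq_of_Δ_sModEq (B.Δ_source _) y).symm, B.counit_left]
    simp [mul_assoc]

theorem counitR_Δ_mul (y : H) (v : H ⊗[k] H) : B.counitR (B.Δ y * v) = y * B.counitR v := by
  induction v using TensorProduct.induction_on with
  | zero => simp
  | add v w hv hw => simp only [mul_add, map_add, hv, hw]
  | tmul a b =>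
    have hweak : ∀ u : H ⊗[k] H,
        B.counitR (u * (a ⊗ₜ[k] b)) = B.counitR (u * ((1 : H) ⊗ₜ[k] B.β (B.ε b))) * a := by
      intro u
      induction u using TensorProduct.induction_on with
      | zero => simp
      | add u w hu hw => simp only [add_mul, map_add, hu, hw]
      | tmul x z => simp [tmul_mul_tmul, mul_assoc, B.ε_mul_target]
    rw [hweak, B.counitR_congr (B.Δ_mul_sModEq_of_Δ_sModEq (B.Δ_target _) y).symm, B.counit_right]
    simp [mul_assoc]

theorem map_counitL_assoc_sModEq (w : (H ⊗[k] H) ⊗[k] H) :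
    TensorProduct.map LinearMap.id B.counitL (TensorProduct.assoc k H H H w)
      ≡ TensorProduct.map B.counitR LinearMap.id w [SMOD B.iR] := by
  induction w using TensorProduct.induction_on with
  | zero => simp [SModEq.refl]
  | add v w hv hw => simpa only [map_add] using hv.add hw
  | tmul xy z =>
    induction xy using TensorProduct.induction_on with
    | zero => simp [SModEq.refl]
    | add v w hv hw => simpa only [TensorProduct.add_tmul, map_add] using hv.add hw
    | tmul x y => simpa using (B.tmul_sModEq_iR (B.ε y) x z).symm

theorem map_counitL_assoc_mem_iR {w : (H ⊗[k] H) ⊗[k] H} (hw : w ∈ B.iR3) :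
    TensorProduct.map LinearMap.id B.counitL (TensorProduct.assoc k H H H w) ∈ B.iR := by
  refine B.iR3_le_comap ((TensorProduct.map LinearMap.id B.counitL)
    ∘ₗ (TensorProduct.assoc k H H H).toLinearMap) B.iR (fun r g g' g'' => ?_)
    (fun r g g' g'' => ?_) hw
  · simpa [B.ε_lmul, mul_assoc] using SModEq.sub_mem.mp (B.tmul_sModEq_iR r g (B.α (B.ε g') * g''))
  · simp [B.ε_rmul, mul_assoc]

end LeftBialgebroid

@[simp] theorem SFmap_apply (T : H →ₗ[k] H) (a b h : H) : SFmap T a b h = a * (T h * b) := rfl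

@[simp] theorem Vof_tmul (T : H →ₗ[k] H) (x y : H) : Vof T (x ⊗ₜ[k] y) = T x * y := by
  simp [Vof]

theorem Vof_add (T : H →ₗ[k] H) (u v : H ⊗[k] H) : Vof T (u + v) = Vof T u + Vof T v := by
  simp [Vof]

theorem Vof_mul_one_tmul (T : H →ₗ[k] H) (u : H ⊗[k] H) (d : H) :
    Vof T (u * ((1 : H) ⊗ₜ[k] d)) = Vof T u * d := by
  induction u using TensorProduct.induction_on with
  | zero => simp [Vof]
  | add u v hu hv => rw [add_mul, Vof_add, Vof_add, hu, hv, add_mul]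
  | tmul x y => simp [tmul_mul_tmul, mul_assoc]

namespace DXCocycle

variable {B : LeftBialgebroid k R H} (C : DXCocycle B)

theorem F_mul_betaF_tmul_sModEq (t : R) :
    C.F * (C.betaF t ⊗ₜ[k] (1 : H)) ≡ C.F * ((1 : H) ⊗ₜ[k] C.alphaF t) [SMOD B.iR] := by
  set X : (H ⊗[k] H) ⊗[k] H := ((1 : H) ⊗ₜ[k] B.α t) ⊗ₜ[k] (1 : H)
  set lhs := TensorProduct.map B.Δ LinearMap.id C.F * (C.F ⊗ₜ[k] (1 : H))
  set rhs := (TensorProduct.assoc k H H H).symm (TensorProduct.map LinearMap.id B.Δ C.F)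
    * (TensorProduct.assoc k H H H).symm ((1 : H) ⊗ₜ[k] C.F)
  have hlhs : ∀ u : H ⊗[k] H, TensorProduct.map B.counitR LinearMap.id
      (TensorProduct.map B.Δ LinearMap.id u * (C.F ⊗ₜ[k] (1 : H)) * X)
        = u * (C.betaF t ⊗ₜ[k] (1 : H)) := by
    intro u
    induction u using TensorProduct.induction_on with
    | zero => simp
    | add u v hu hv => simp only [map_add, add_mul, hu, hv]
    | tmul x y => simp [X, tmul_mul_tmul, mul_assoc, B.counitR_Δ_mul, betaF]
  have hrhs : ∀ u : H ⊗[k] H, TensorProduct.map LinearMap.id B.counitL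
      (TensorProduct.assoc k H H H ((TensorProduct.assoc k H H H).symm
        (TensorProduct.map LinearMap.id B.Δ u)
          * (TensorProduct.assoc k H H H).symm ((1 : H) ⊗ₜ[k] C.F) * X))
        = u * ((1 : H) ⊗ₜ[k] C.alphaF t) := by
    intro u
    induction u using TensorProduct.induction_on with
    | zero => simp
    | add u v hu hv => simp only [map_add, add_mul, hu, hv]
    | tmul x y =>
      simp [TensorProduct.assoc_mul, X, tmul_mul_tmul, mul_assoc, B.counitL_Δ_mul, alphaF]
  have hcocycle : TensorProduct.map LinearMap.id B.counitL (TensorProduct.assoc k H H H (lhs * X))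
      ≡ TensorProduct.map LinearMap.id B.counitL (TensorProduct.assoc k H H H (rhs * X))
        [SMOD B.iR] := by
    refine SModEq.sub_mem.mpr ?_
    rw [← map_sub, ← map_sub, ← sub_mul]
    exact B.map_counitL_assoc_mem_iR (B.iR3_le_comap_mulRight _ _ _ C.cocycle)
  rw [← hlhs, ← hrhs]
  exact (B.map_counitL_assoc_sModEq _).symm.trans hcocycle

end DXCocycle

namespace BSAntipode

variable {B : LeftBialgebroid k R H} (A : BSAntipode B)

theorem Sinv_one : A.Sinv 1 = 1 := by
  simpa [A.S_one] using A.Sinv_S 1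

theorem Sinv_mul (x y : H) : A.Sinv (x * y) = A.Sinv y * A.Sinv x := by
  rw [← A.Sinv_S (A.Sinv y * A.Sinv x), A.S_antimul, A.S_Sinv, A.S_Sinv]

theorem Vof_congr {u v : H ⊗[k] H} (h : u ≡ v [SMOD B.iR]) : Vof A.S u = Vof A.S v := by
  have hle : B.iR ≤ (⊥ : Submodule k H).comap (LinearMap.mul' k H ∘ₗ map A.S LinearMap.id) :=
    B.iR_le_comap _ _ fun r g g' => by simp [A.S_antimul, A.Sβ, mul_assoc]
  simpa [sub_eq_zero, Vof] using hle (SModEq.sub_mem.mp h)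

theorem Vof_mul_tmul_one (u : H ⊗[k] H) (c : H) :
    Vof A.S (u * (c ⊗ₜ[k] (1 : H))) = A.S c * Vof A.S u := by
  induction u using TensorProduct.induction_on with
  | zero => simp [Vof]
  | add u v hu hv => rw [add_mul, Vof_add, Vof_add, hu, hv, mul_add]
  | tmul x y => simp [tmul_mul_tmul, A.S_antimul, mul_assoc]

theorem SFmap_one {a b : H} (hab : a * b = 1) : SFmap A.S a b 1 = 1 := by
  rw [SFmap_apply, A.S_one, one_mul, hab]

theorem SFmap_mul {a b : H} (hba : b * a = 1) (g h : H) :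
    SFmap A.S a b (g * h) = SFmap A.S a b h * SFmap A.S a b g := by
  simp only [SFmap_apply, A.S_antimul]
  rw [show a * (A.S h * b) * (a * (A.S g * b)) = a * (A.S h * (b * a) * (A.S g * b)) by
    noncomm_ring, hba, mul_one, mul_assoc]

theorem SFmap_Sinv_SFmap {a b : H} (hba : b * a = 1) (h : H) :
    SFmap A.Sinv (A.Sinv a) (A.Sinv b) (SFmap A.S a b h) = h := by
  simp only [SFmap_apply, A.Sinv_mul, A.Sinv_S]
  rw [show A.Sinv a * (A.Sinv b * h * A.Sinv a * A.Sinv b)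
    = A.Sinv a * A.Sinv b * h * (A.Sinv a * A.Sinv b) by noncomm_ring, ← A.Sinv_mul, hba,
    A.Sinv_one, one_mul, mul_one]

theorem SFmap_SFmap_Sinv {a b : H} (hab : a * b = 1) (h : H) :
    SFmap A.S a b (SFmap A.Sinv (A.Sinv a) (A.Sinv b) h) = h := by
  simp only [SFmap_apply, A.S_antimul, A.S_Sinv]
  rw [show a * (b * h * a * b) = a * b * h * (a * b) by noncomm_ring, hab, one_mul, mul_one]

theorem SFmap_betaF (C : DXCocycle B) {Vinv : H} (hV : Vinv * Vof A.S C.F = 1) (t : R) :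
    SFmap A.S Vinv (Vof A.S C.F) (C.betaF t) = C.alphaF t := by
  have h := A.Vof_congr (C.F_mul_betaF_tmul_sModEq t)
  rw [A.Vof_mul_tmul_one, Vof_mul_one_tmul] at h
  rw [SFmap_apply, h, ← mul_assoc, hV, one_mul]

end BSAntipode

/-! ### The left antipode axiom of `H_F` -/

@[simp] theorem sandL_tmul (Dl : H →ₗ[k] H ⊗[k] H) (T : H →ₗ[k] H) (c : H ⊗[k] H) (x y : H) :
    sandL Dl T c (x ⊗ₜ[k] y) = Dl (T x) * c * (y ⊗ₜ[k] (1 : H)) := by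
  simp [sandL]

theorem sandL_add_left (Dl : H →ₗ[k] H ⊗[k] H) (T : H →ₗ[k] H) (c c' u : H ⊗[k] H) :
    sandL Dl T (c + c') u = sandL Dl T c u + sandL Dl T c' u := by
  induction u using TensorProduct.induction_on with
  | zero => simp
  | add u v hu hv => simp only [map_add, hu, hv]; abel
  | tmul x y => simp [mul_add, add_mul]

theorem sandL_zero_left (Dl : H →ₗ[k] H ⊗[k] H) (T : H →ₗ[k] H) (u : H ⊗[k] H) :
    sandL Dl T 0 u = 0 := by
  induction u using TensorProduct.induction_on with
  | zero => simp
  | add u v hu hv => simp only [map_add, hu, hv, add_zero]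
  | tmul x y => simp

theorem sandL_mul_one_tmul (Dl : H →ₗ[k] H ⊗[k] H) (T : H →ₗ[k] H) (c u : H ⊗[k] H) (d : H) :
    sandL Dl T (c * ((1 : H) ⊗ₜ[k] d)) u = sandL Dl T c u * ((1 : H) ⊗ₜ[k] d) := by
  induction u using TensorProduct.induction_on with
  | zero => simp
  | add u v hu hv => simp only [map_add, hu, hv, add_mul]
  | tmul x y => simp [mul_assoc, tmul_mul_tmul]

theorem trimapL_tmul (Dl : H →ₗ[k] H ⊗[k] H) (T : H →ₗ[k] H) (w : H ⊗[k] H) (z : H) :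
    trimapL Dl T (w ⊗ₜ[k] z) = sandL Dl T 1 w * ((1 : H) ⊗ₜ[k] z) := by
  induction w using TensorProduct.induction_on with
  | zero => simp
  | add u v hu hv => simp only [TensorProduct.add_tmul, map_add, hu, hv, add_mul]
  | tmul x y => simp [trimapL, mul_assoc, tmul_mul_tmul]

theorem trimapL_assoc_symm (Dl : H →ₗ[k] H ⊗[k] H) (T : H →ₗ[k] H) (x : H) (m : H ⊗[k] H) :
    trimapL Dl T ((TensorProduct.assoc k H H H).symm (x ⊗ₜ[k] m)) = Dl (T x) * m := by
  simp [trimapL]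

namespace DXCocycle

variable {B : LeftBialgebroid k R H} (C : DXCocycle B)

theorem ΔF_apply (h : H) : C.ΔF h = C.Fbar * (B.Δ h * C.F) := rfl

theorem Fbar_mul_sModEq {u v : H ⊗[k] H} (h : u ≡ v [SMOD B.iR]) :
    C.Fbar * u ≡ C.Fbar * v [SMOD C.iRF] :=
  SModEq.sub_mem.mpr (by rw [← mul_sub]; exact ⟨_, SModEq.sub_mem.mp h, rfl⟩)

theorem sModEq_mul_right {u v : H ⊗[k] H} (h : u ≡ v [SMOD C.iRF]) (w : H ⊗[k] H) :
    u * w ≡ v * w [SMOD C.iRF] := by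
  obtain ⟨x, hx, hxuv⟩ := SModEq.sub_mem.mp h
  refine SModEq.sub_mem.mpr ⟨x * w, B.iR_le_comap_mulRight w hx, ?_⟩
  simp only [LinearMap.mulLeft_apply] at hxuv ⊢
  rw [← mul_assoc, hxuv, sub_mul]

theorem Fbar_mul_F_mul (w : H ⊗[k] H) : C.Fbar * (C.F * w) ≡ w [SMOD C.iRF] := by
  simpa [mul_assoc] using C.sModEq_mul_right (SModEq.sub_mem.mpr C.inv_left) w

end DXCocycle

namespace LeftBialgebroid

variable (B : LeftBialgebroid k R H)

theorem sandL_congr (T : H →ₗ[k] H) {c c' : H ⊗[k] H} (h : c ≡ c' [SMOD B.iR])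
    (u : H ⊗[k] H) : sandL B.Δ T c u ≡ sandL B.Δ T c' u [SMOD B.iR] := by
  induction u using TensorProduct.induction_on with
  | zero => simp [SModEq.refl]
  | add u v hu hv => simpa only [map_add] using hu.add hv
  | tmul x y =>
    simpa only [sandL_tmul] using B.sModEq_mul_right (B.sModEq_Δ_mul h (T x)) _

end LeftBialgebroid

namespace BSAntipode

variable {B : LeftBialgebroid k R H} (A : BSAntipode B)

theorem sandL_mul (c u v : H ⊗[k] H) :
    sandL B.Δ A.S c (u * v) ≡ sandL B.Δ A.S (sandL B.Δ A.S c u) v [SMOD B.iR] := by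
  induction v using TensorProduct.induction_on with
  | zero => simp [SModEq.refl]
  | add v w hv hw => simpa only [mul_add, map_add] using hv.add hw
  | tmul a b =>
    rw [sandL_tmul]
    induction u using TensorProduct.induction_on with
    | zero => simp [SModEq.refl]
    | add u w hu hw => simpa only [add_mul, map_add, mul_add] using hu.add hw
    | tmul x y =>
      have h := B.sModEq_mul_right (B.Δ_mul_sModEq (A.S a) (A.S x)) (c * (y ⊗ₜ[k] (1 : H)))
      simpa [tmul_mul_tmul, A.S_antimul, mul_assoc] using
        B.sModEq_mul_right h (b ⊗ₜ[k] (1 : H))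

theorem sandL_one_tmul_congr (c : H) {u v : H ⊗[k] H} (h : u ≡ v [SMOD B.iR]) :
    sandL B.Δ A.S ((1 : H) ⊗ₜ[k] c) u ≡ sandL B.Δ A.S ((1 : H) ⊗ₜ[k] c) v [SMOD B.iR] := by
  have hle : B.iR ≤ B.iR.comap (sandL B.Δ A.S ((1 : H) ⊗ₜ[k] c)) := by
    refine B.iR_le_comap _ _ fun r g g' => SModEq.sub_mem.mp ?_
    have hΔ := B.sModEq_mul_right (B.Δ_mul_sModEq_of_Δ_sModEq (B.Δ_source r) (A.S g))
      (g' ⊗ₜ[k] c)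
    simpa [A.S_antimul, A.Sβ, tmul_mul_tmul, mul_assoc] using hΔ
  exact SModEq.sub_mem.mpr (by simpa using hle (SModEq.sub_mem.mp h))

theorem sandL_Δ (h : H) : sandL B.Δ A.S 1 (B.Δ h) ≡ (1 : H) ⊗ₜ[k] A.S h [SMOD B.iR] :=
  SModEq.sub_mem.mpr (A.left_axiom h)

theorem trimapL_mem_iR {w : (H ⊗[k] H) ⊗[k] H} (hw : w ∈ B.iR3) : trimapL B.Δ A.S w ∈ B.iR := by
  refine B.iR3_le_comap (trimapL B.Δ A.S) B.iR (fun r g g' g'' => SModEq.sub_mem.mp ?_)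
    (fun r g g' g'' => ?_) hw
  · have hΔ := B.sModEq_mul_right (B.Δ_mul_sModEq_of_Δ_sModEq (B.Δ_source r) (A.S g))
      (g' ⊗ₜ[k] g'')
    simpa [trimapL, A.S_antimul, A.Sβ, tmul_mul_tmul, mul_assoc] using hΔ
  · simpa [trimapL, mul_sub] using
      B.Δ_ideal (A.S g) _ (SModEq.sub_mem.mp (B.tmul_sModEq_iR r g' g''))

theorem trimapL_map_Δ (u : H ⊗[k] H) :
    trimapL B.Δ A.S (TensorProduct.map B.Δ LinearMap.id u)
      ≡ (1 : H) ⊗ₜ[k] Vof A.S u [SMOD B.iR] := by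
  induction u using TensorProduct.induction_on with
  | zero => simp [SModEq.refl, Vof]
  | add u v hu hv => simpa only [map_add, Vof_add, TensorProduct.tmul_add] using hu.add hv
  | tmul x y =>
    simpa [trimapL_tmul, tmul_mul_tmul] using B.sModEq_mul_right (A.sandL_Δ x) (1 ⊗ₜ[k] y)

theorem trimapL_map_Δ_mul (u v : H ⊗[k] H) :
    trimapL B.Δ A.S (TensorProduct.map B.Δ LinearMap.id u * (v ⊗ₜ[k] (1 : H)))
      ≡ sandL B.Δ A.S (trimapL B.Δ A.S (TensorProduct.map B.Δ LinearMap.id u)) v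
        [SMOD B.iR] := by
  induction u using TensorProduct.induction_on with
  | zero => simp [sandL_zero_left, SModEq.refl]
  | add u w hu hw => simpa only [map_add, add_mul, sandL_add_left] using hu.add hw
  | tmul x y =>
    simpa [tmul_mul_tmul, trimapL_tmul, sandL_mul_one_tmul] using
      B.sModEq_mul_right (A.sandL_mul 1 (B.Δ x) v) ((1 : H) ⊗ₜ[k] y)

theorem trimapL_assoc_symm_map_Δ_mul (u v : H ⊗[k] H) :
    trimapL B.Δ A.S ((TensorProduct.assoc k H H H).symm (TensorProduct.map LinearMap.id B.Δ u)
        * (TensorProduct.assoc k H H H).symm ((1 : H) ⊗ₜ[k] v))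
      ≡ B.Δ (Vof A.S u) * v [SMOD B.iR] := by
  induction u using TensorProduct.induction_on with
  | zero => simp [SModEq.refl, Vof]
  | add u w hu hw => simpa only [map_add, add_mul, Vof_add] using hu.add hw
  | tmul x y =>
    rw [← TensorProduct.assoc_symm_mul, map_tmul, LinearMap.id_apply, tmul_mul_tmul, mul_one,
      trimapL_assoc_symm, ← mul_assoc, Vof_tmul]
    exact B.sModEq_mul_right (B.Δ_mul_sModEq _ _).symm v

variable (C : DXCocycle B)

theorem Δ_Vof_mul_F :
    B.Δ (Vof A.S C.F) * C.F ≡ sandL B.Δ A.S ((1 : H) ⊗ₜ[k] Vof A.S C.F) C.F [SMOD B.iR] :=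
  calc B.Δ (Vof A.S C.F) * C.F
      ≡ trimapL B.Δ A.S ((TensorProduct.assoc k H H H).symm
          (TensorProduct.map LinearMap.id B.Δ C.F)
            * (TensorProduct.assoc k H H H).symm ((1 : H) ⊗ₜ[k] C.F)) [SMOD B.iR] :=
        (A.trimapL_assoc_symm_map_Δ_mul C.F C.F).symm
    _ ≡ trimapL B.Δ A.S (TensorProduct.map B.Δ LinearMap.id C.F * (C.F ⊗ₜ[k] (1 : H)))
          [SMOD B.iR] :=
        (SModEq.sub_mem.mpr (by rw [← map_sub]; exact A.trimapL_mem_iR C.cocycle)).symm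
    _ ≡ sandL B.Δ A.S (trimapL B.Δ A.S (TensorProduct.map B.Δ LinearMap.id C.F)) C.F
          [SMOD B.iR] := A.trimapL_map_Δ_mul C.F C.F
    _ ≡ sandL B.Δ A.S ((1 : H) ⊗ₜ[k] Vof A.S C.F) C.F [SMOD B.iR] :=
        B.sandL_congr A.S (A.trimapL_map_Δ C.F) C.F

theorem sandL_Δ_Vof_mul_F_Fbar :
    sandL B.Δ A.S (B.Δ (Vof A.S C.F) * C.F) C.Fbar ≡ (1 : H) ⊗ₜ[k] Vof A.S C.F [SMOD B.iR] :=
  calc sandL B.Δ A.S (B.Δ (Vof A.S C.F) * C.F) C.Fbar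
      ≡ sandL B.Δ A.S (sandL B.Δ A.S ((1 : H) ⊗ₜ[k] Vof A.S C.F) C.F) C.Fbar [SMOD B.iR] :=
        B.sandL_congr A.S (A.Δ_Vof_mul_F C) C.Fbar
    _ ≡ sandL B.Δ A.S ((1 : H) ⊗ₜ[k] Vof A.S C.F) (C.F * C.Fbar) [SMOD B.iR] :=
        (A.sandL_mul _ _ _).symm
    _ ≡ sandL B.Δ A.S ((1 : H) ⊗ₜ[k] Vof A.S C.F) 1 [SMOD B.iR] :=
        A.sandL_one_tmul_congr _ (SModEq.sub_mem.mpr C.inv_right)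
    _ ≡ (1 : H) ⊗ₜ[k] Vof A.S C.F [SMOD B.iR] := by
        simpa [Algebra.TensorProduct.one_def, A.S_one, mul_assoc, tmul_mul_tmul] using
          B.sModEq_mul_right B.Δ_one_sModEq ((1 : H) ⊗ₜ[k] Vof A.S C.F)

theorem sandL_ΔF_SFmap (a b : H) (u : H ⊗[k] H) :
    sandL C.ΔF (SFmap A.S a b) 1 u
      ≡ C.Fbar * (B.Δ a * sandL B.Δ A.S (B.Δ b * C.F) u) [SMOD C.iRF] := by
  induction u using TensorProduct.induction_on with
  | zero => simp [SModEq.refl]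
  | add u v hu hv => simpa only [map_add, mul_add] using hu.add hv
  | tmul x y =>
    have hΔ := B.Δ_mul_sModEq_of_Δ_sModEq (B.Δ_mul_sModEq (A.S x) b) a
    simpa [C.ΔF_apply, mul_assoc] using
      C.Fbar_mul_sModEq (B.sModEq_mul_right hΔ (C.F * (y ⊗ₜ[k] (1 : H))))

theorem twisted_left_axiom {Vinv : H} (hV1 : Vof A.S C.F * Vinv = 1)
    (hV2 : Vinv * Vof A.S C.F = 1) (h : H) :
    sandL C.ΔF (SFmap A.S Vinv (Vof A.S C.F)) 1 (C.ΔF h)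
      ≡ (1 : H) ⊗ₜ[k] SFmap A.S Vinv (Vof A.S C.F) h [SMOD C.iRF] := by
  set V := Vof A.S C.F
  have hinner : sandL B.Δ A.S (sandL B.Δ A.S (B.Δ V * C.F) C.Fbar) (B.Δ h)
      ≡ (1 : H) ⊗ₜ[k] (A.S h * V) [SMOD B.iR] := by
    refine (B.sandL_congr A.S (A.sandL_Δ_Vof_mul_F_Fbar C) _).trans ?_
    rw [← one_mul ((1 : H) ⊗ₜ[k] V), sandL_mul_one_tmul]
    simpa [tmul_mul_tmul] using B.sModEq_mul_right (A.sandL_Δ h) ((1 : H) ⊗ₜ[k] V)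
  have houter : sandL B.Δ A.S ((1 : H) ⊗ₜ[k] (A.S h * V)) C.F
      ≡ B.Δ V * C.F * ((1 : H) ⊗ₜ[k] SFmap A.S Vinv V h) [SMOD B.iR] := by
    have hsplit : (1 : H) ⊗ₜ[k] (A.S h * V)
        = (1 : H) ⊗ₜ[k] V * ((1 : H) ⊗ₜ[k] SFmap A.S Vinv V h) := by
      rw [tmul_mul_tmul, one_mul, SFmap_apply, ← mul_assoc, hV1, one_mul]
    rw [hsplit, sandL_mul_one_tmul]
    exact B.sModEq_mul_right (A.Δ_Vof_mul_F C).symm _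
  have hVinvV : B.Δ Vinv * B.Δ V ≡ 1 [SMOD B.iR] := by
    have h := (B.Δ_mul_sModEq Vinv V).symm
    rw [hV2] at h
    exact h.trans B.Δ_one_sModEq
  calc sandL C.ΔF (SFmap A.S Vinv V) 1 (C.ΔF h)
      ≡ C.Fbar * (B.Δ Vinv * sandL B.Δ A.S (B.Δ V * C.F) (C.Fbar * (B.Δ h * C.F)))
        [SMOD C.iRF] := A.sandL_ΔF_SFmap C _ _ _
    _ ≡ C.Fbar * (B.Δ Vinv * (B.Δ V * C.F * ((1 : H) ⊗ₜ[k] SFmap A.S Vinv V h)))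
        [SMOD C.iRF] := by
      refine C.Fbar_mul_sModEq (B.sModEq_Δ_mul ?_ _)
      exact (A.sandL_mul _ C.Fbar _).trans ((A.sandL_mul _ (B.Δ h) C.F).trans
        ((B.sandL_congr A.S hinner C.F).trans houter))
    _ ≡ C.Fbar * (C.F * ((1 : H) ⊗ₜ[k] SFmap A.S Vinv V h)) [SMOD C.iRF] := by
      refine C.Fbar_mul_sModEq ?_
      simpa [mul_assoc] using B.sModEq_mul_right hVinvV (C.F * ((1 : H) ⊗ₜ[k] SFmap A.S Vinv V h))
    _ ≡ (1 : H) ⊗ₜ[k] SFmap A.S Vinv V h [SMOD C.iRF] := C.Fbar_mul_F_mul _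

end BSAntipode

/-! ### The co-opposite Hopf algebroid -/

@[simp] theorem sandR_tmul (Dl : H →ₗ[k] H ⊗[k] H) (T : H →ₗ[k] H) (c : H ⊗[k] H) (x y : H) :
    sandR Dl T c (x ⊗ₜ[k] y) = Dl (T y) * c * ((1 : H) ⊗ₜ[k] x) := by
  simp [sandR]

theorem sandL_comm_comp (Dl : H →ₗ[k] H ⊗[k] H) (T : H →ₗ[k] H) (u : H ⊗[k] H) :
    sandL ((TensorProduct.comm k H H).toLinearMap ∘ₗ Dl) T 1 (TensorProduct.comm k H H u)
      = TensorProduct.comm k H H (sandR Dl T 1 u) := by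
  induction u using TensorProduct.induction_on with
  | zero => simp
  | add u v hu hv => simp only [map_add, hu, hv]
  | tmul x y => simp [TensorProduct.comm_mul]

theorem sandR_comm_comp (Dl : H →ₗ[k] H ⊗[k] H) (T : H →ₗ[k] H) (u : H ⊗[k] H) :
    sandR ((TensorProduct.comm k H H).toLinearMap ∘ₗ Dl) T 1 (TensorProduct.comm k H H u)
      = TensorProduct.comm k H H (sandL Dl T 1 u) := by
  induction u using TensorProduct.induction_on with
  | zero => simp
  | add u v hu hv => simp only [map_add, hu, hv]
  | tmul x y => simp [TensorProduct.comm_mul]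

variable (k H) in
def tensorReverse : (H ⊗[k] H) ⊗[k] H ≃ₐ[k] (H ⊗[k] H) ⊗[k] H :=
  (Algebra.TensorProduct.comm k (H ⊗[k] H) H).trans
    ((Algebra.TensorProduct.congr AlgEquiv.refl (Algebra.TensorProduct.comm k H H)).trans
      (Algebra.TensorProduct.assoc k k k H H H).symm)

@[simp] theorem tensorReverse_tmul (a b c : H) :
    tensorReverse k H ((a ⊗ₜ[k] b) ⊗ₜ[k] c) = (c ⊗ₜ[k] b) ⊗ₜ[k] a := rfl

theorem comm_tmul_eq_tensorReverse (m : H ⊗[k] H) (x : H) :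
    TensorProduct.comm k H H m ⊗ₜ[k] x
      = tensorReverse k H ((TensorProduct.assoc k H H H).symm (x ⊗ₜ[k] m)) := by
  induction m using TensorProduct.induction_on with
  | zero => simp
  | add m m' hm hm' => simp only [map_add, TensorProduct.add_tmul, TensorProduct.tmul_add, hm, hm']
  | tmul a b => rfl

theorem assoc_symm_tmul_comm_eq_tensorReverse (m : H ⊗[k] H) (y : H) :
    (TensorProduct.assoc k H H H).symm (y ⊗ₜ[k] TensorProduct.comm k H H m)
      = tensorReverse k H (m ⊗ₜ[k] y) := by
  induction m using TensorProduct.induction_on with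
  | zero => simp
  | add m m' hm hm' => simp only [map_add, TensorProduct.add_tmul, TensorProduct.tmul_add, hm, hm']
  | tmul a b => rfl

namespace BgdCore

variable (D : BgdCore k R H)

def cop : BgdCore k Rᵐᵒᵖ H where
  α :=
    { toFun := fun r => D.β r.unop
      map_one' := D.β_one
      map_mul' := fun r s => D.β_mul s.unop r.unop
      map_zero' := map_zero D.β
      map_add' := fun r s => map_add D.β r.unop s.unop
      commutes' := fun c => by
        simp [Algebra.algebraMap_eq_smul_one, D.β_one] }
  β := D.α.toLinearMap ∘ₗ (MulOpposite.opLinearEquiv k).symm.toLinearMap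
  β_one := by simp
  β_mul r s := by simp
  αβ_comm r s := (D.αβ_comm s.unop r.unop).symm
  Δ := (TensorProduct.comm k H H).toLinearMap ∘ₗ D.Δ
  ε := (MulOpposite.opLinearEquiv k).toLinearMap ∘ₗ D.ε

@[simp] theorem cop_α (r : Rᵐᵒᵖ) : D.cop.α r = D.β r.unop := rfl
@[simp] theorem cop_β (r : Rᵐᵒᵖ) : D.cop.β r = D.α r.unop := rfl
@[simp] theorem cop_Δ (h : H) : D.cop.Δ h = TensorProduct.comm k H H (D.Δ h) := rfl
@[simp] theorem cop_ε (h : H) : D.cop.ε h = MulOpposite.op (D.ε h) := rfl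

theorem iR_cop : D.cop.iR = D.iR.map (TensorProduct.comm k H H).toLinearMap := by
  apply le_antisymm
  · refine Submodule.span_le.mpr ?_
    rintro _ ⟨r, g, g', rfl⟩
    refine ⟨-((D.β r.unop * g') ⊗ₜ[k] g - g' ⊗ₜ[k] (D.α r.unop * g)),
      neg_mem (Submodule.subset_span ⟨r.unop, g', g, rfl⟩), by simp⟩
  · refine Submodule.map_le_iff_le_comap.mpr (D.iR_le_comap _ _ fun r g g' => ?_)
    have hgen : (D.cop.β (MulOpposite.op r) * g') ⊗ₜ[k] g
        - g' ⊗ₜ[k] (D.cop.α (MulOpposite.op r) * g) ∈ D.cop.iR :=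
      Submodule.subset_span ⟨_, g', g, rfl⟩
    simpa using neg_mem hgen

theorem map_tensorReverse_iR3_le : D.iR3.map (tensorReverse k H).toLinearMap ≤ D.cop.iR3 := by
  refine Submodule.map_le_iff_le_comap.mpr
    (D.iR3_le_comap _ _ (fun r g g' g'' => ?_) fun r g g' g'' => ?_)
  · have hgen : (g'' ⊗ₜ[k] (D.cop.β (MulOpposite.op r) * g')) ⊗ₜ[k] g
        - (g'' ⊗ₜ[k] g') ⊗ₜ[k] (D.cop.α (MulOpposite.op r) * g) ∈ D.cop.iR3 :=
      Submodule.subset_span (Or.inr ⟨_, g'', g', g, rfl⟩)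
    simpa using neg_mem hgen
  · have hgen : ((D.cop.β (MulOpposite.op r) * g'') ⊗ₜ[k] g') ⊗ₜ[k] g
        - (g'' ⊗ₜ[k] (D.cop.α (MulOpposite.op r) * g')) ⊗ₜ[k] g ∈ D.cop.iR3 :=
      Submodule.subset_span (Or.inl ⟨_, g'', g', g, rfl⟩)
    simpa using neg_mem hgen

theorem cop_counitL_comm (u : H ⊗[k] H) :
    D.cop.counitL (TensorProduct.comm k H H u) = D.counitR u := by
  induction u using TensorProduct.induction_on with
  | zero => simp
  | add u v hu hv => simp only [map_add, hu, hv]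
  | tmul x y => simp

theorem cop_counitR_comm (u : H ⊗[k] H) :
    D.cop.counitR (TensorProduct.comm k H H u) = D.counitL u := by
  induction u using TensorProduct.induction_on with
  | zero => simp
  | add u v hu hv => simp only [map_add, hu, hv]
  | tmul x y => simp

theorem comm_mem_iR_cop {u : H ⊗[k] H} (hu : u ∈ D.iR) :
    TensorProduct.comm k H H u ∈ D.cop.iR :=
  D.iR_cop ▸ ⟨u, hu, rfl⟩

theorem map_cop_Δ_comm (u : H ⊗[k] H) :
    TensorProduct.map D.cop.Δ LinearMap.id (TensorProduct.comm k H H u)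
      = tensorReverse k H ((TensorProduct.assoc k H H H).symm
          (TensorProduct.map LinearMap.id D.Δ u)) := by
  induction u using TensorProduct.induction_on with
  | zero => simp
  | add u v hu hv => simp only [map_add, hu, hv]
  | tmul x y => simp [comm_tmul_eq_tensorReverse]

theorem assoc_symm_map_cop_Δ_comm (u : H ⊗[k] H) :
    (TensorProduct.assoc k H H H).symm
        (TensorProduct.map LinearMap.id D.cop.Δ (TensorProduct.comm k H H u))
      = tensorReverse k H (TensorProduct.map D.Δ LinearMap.id u) := by
  induction u using TensorProduct.induction_on with
  | zero => simp
  | add u v hu hv => simp only [map_add, hu, hv]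
  | tmul x y => simp [assoc_symm_tmul_comm_eq_tensorReverse]

end BgdCore

namespace LeftBialgebroid

variable (B : LeftBialgebroid k R H)

def cop : LeftBialgebroid k Rᵐᵒᵖ H where
  toBgdCore := B.toBgdCore.cop
  εα r := by simp [B.εβ]
  εβ r := by simp [B.εα]
  ε_lmul r h := by simp [B.ε_rmul]
  ε_rmul r h := by simp [B.ε_lmul]
  ε_weakmul g h := by simp [B.ε_mul_target]
  counit_left h := by simp [BgdCore.cop_counitL_comm, B.counit_right]
  counit_right h := by simp [BgdCore.cop_counitR_comm, B.counit_left]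
  Δ_one := by simpa using B.comm_mem_iR_cop B.Δ_one
  Δ_mul g h := by simpa [TensorProduct.comm_mul] using B.comm_mem_iR_cop (B.Δ_mul g h)
  Δ_bimod a b h := by
    have hcomm : B.β a.unop * (B.α b.unop * h) = B.α b.unop * (B.β a.unop * h) := by
      rw [← mul_assoc, ← B.αβ_comm, mul_assoc]
    simpa [hcomm, TensorProduct.comm_mul] using B.comm_mem_iR_cop (B.Δ_bimod b.unop a.unop h)
  Δ_ideal h x hx := by
    rw [BgdCore.iR_cop] at hx ⊢
    obtain ⟨y, hy, rfl⟩ := hx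
    exact ⟨B.Δ h * y, B.Δ_ideal h y hy, by simp [TensorProduct.comm_mul]⟩
  coassoc h := by
    refine B.map_tensorReverse_iR3_le ⟨_, neg_mem (B.coassoc h), ?_⟩
    simp [BgdCore.map_cop_Δ_comm, BgdCore.assoc_symm_map_cop_Δ_comm]

@[simp] theorem cop_toBgdCore : B.cop.toBgdCore = B.toBgdCore.cop := rfl

end LeftBialgebroid

namespace BSAntipode

variable {B : LeftBialgebroid k R H} (A : BSAntipode B)

def cop : BSAntipode B.cop where
  S := A.Sinv
  Sinv := A.S
  S_Sinv := A.Sinv_S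
  Sinv_S := A.S_Sinv
  S_one := A.Sinv_one
  S_antimul := A.Sinv_mul
  Sβ r := A.Sinvα r.unop
  Sinvα r := A.Sβ r.unop
  left_axiom h := by
    have h' := B.comm_mem_iR_cop (A.right_axiom h)
    rw [map_sub, ← sandL_comm_comp] at h'
    rwa [TensorProduct.comm_tmul] at h'
  right_axiom h := by
    have h' := B.comm_mem_iR_cop (A.left_axiom h)
    rw [map_sub, ← sandR_comm_comp] at h'
    rwa [TensorProduct.comm_tmul] at h'

@[simp] theorem cop_S : A.cop.S = A.Sinv := rfl

theorem Vof_Sinv_comm (u : H ⊗[k] H) :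
    Vof A.Sinv (TensorProduct.comm k H H u) = A.Sinv (Vof A.S u) := by
  induction u using TensorProduct.induction_on with
  | zero => simp [Vof]
  | add u v hu hv => rw [map_add, Vof_add, Vof_add, hu, hv, map_add]
  | tmul x y => simp [A.Sinv_mul, A.Sinv_S]

end BSAntipode

namespace DXCocycle

variable {B : LeftBialgebroid k R H} (C : DXCocycle B)

def cop : DXCocycle B.cop where
  F := TensorProduct.comm k H H C.F
  Fbar := TensorProduct.comm k H H C.Fbar
  counital_l := (B.cop_counitL_comm C.F).trans C.counital_r
  counital_r := (B.cop_counitR_comm C.F).trans C.counital_l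
  cocycle := by
    refine B.map_tensorReverse_iR3_le ⟨_, neg_mem C.cocycle, ?_⟩
    have h₁ := comm_tmul_eq_tensorReverse C.F 1
    have h₂ := assoc_symm_tmul_comm_eq_tensorReverse C.F 1
    simp only [LeftBialgebroid.cop_toBgdCore, AlgEquiv.toLinearMap_apply, map_sub, map_mul,
      neg_sub, BgdCore.map_cop_Δ_comm, BgdCore.assoc_symm_map_cop_Δ_comm, h₁, h₂]
  inv_right := by simpa [TensorProduct.comm_mul] using B.comm_mem_iR_cop C.inv_right
  inv_left := by
    obtain ⟨x, hx, hxF⟩ := C.inv_left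
    refine ⟨TensorProduct.comm k H H x, B.comm_mem_iR_cop hx, ?_⟩
    simp only [LinearMap.mulLeft_apply] at hxF ⊢
    rw [← TensorProduct.comm_mul, hxF, map_sub, TensorProduct.comm_mul, TensorProduct.comm_one]

theorem cop_ΔF (h : H) : C.cop.ΔF h = TensorProduct.comm k H H (C.ΔF h) := by
  simp [ΔF_apply, TensorProduct.comm_mul, cop]

theorem mem_iRF_of_comm_mem {u : H ⊗[k] H} (hu : TensorProduct.comm k H H u ∈ C.cop.iRF) :
    u ∈ C.iRF := by
  obtain ⟨y, hy, hyu⟩ := hu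
  rw [LeftBialgebroid.cop, BgdCore.iR_cop] at hy
  obtain ⟨z, hz, rfl⟩ := hy
  refine ⟨z, hz, (TensorProduct.comm k H H).injective ?_⟩
  simpa [TensorProduct.comm_mul, cop] using hyu

end DXCocycle

namespace BSAntipode

variable {B : LeftBialgebroid k R H} (A : BSAntipode B) (C : DXCocycle B)

theorem twisted_right_axiom {Vinv : H} (hV1 : Vof A.S C.F * Vinv = 1)
    (hV2 : Vinv * Vof A.S C.F = 1) (h : H) :
    sandR C.ΔF (SFmap A.Sinv (A.Sinv Vinv) (A.Sinv (Vof A.S C.F))) 1 (C.ΔF h)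
      - SFmap A.Sinv (A.Sinv Vinv) (A.Sinv (Vof A.S C.F)) h ⊗ₜ[k] (1 : H) ∈ C.iRF := by
  have hVcop : Vof A.cop.S C.cop.F = A.Sinv (Vof A.S C.F) := A.Vof_Sinv_comm C.F
  have hV1' : Vof A.cop.S C.cop.F * A.Sinv Vinv = 1 := by
    rw [hVcop, ← A.Sinv_mul, hV2, A.Sinv_one]
  have hV2' : A.Sinv Vinv * Vof A.cop.S C.cop.F = 1 := by
    rw [hVcop, ← A.Sinv_mul, hV1, A.Sinv_one]
  have hleft := SModEq.sub_mem.mp (A.cop.twisted_left_axiom C.cop hV1' hV2' h)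
  refine C.mem_iRF_of_comm_mem ?_
  have hΔF : C.cop.ΔF = (TensorProduct.comm k H H).toLinearMap ∘ₗ C.ΔF :=
    LinearMap.ext C.cop_ΔF
  rw [hVcop, hΔF, LinearMap.comp_apply, LinearEquiv.coe_coe, sandL_comm_comp] at hleft
  simpa using hleft

end BSAntipode

/-- Main theorem: `S_F : h ↦ V_F⁻¹(Sh)V_F` is an invertible antipode for the
twisted bialgebroid `H_F`, with inverse `S_F⁻¹ : h ↦ (S⁻¹V_F⁻¹)(S⁻¹h)(S⁻¹V_F)`. -/
theorem main_twisted_antipode (B : LeftBialgebroid k R H) (A : BSAntipode B)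
    (C : DXCocycle B) (Vinv : H)
    (hV1 : Vof A.S C.F * Vinv = 1) (hV2 : Vinv * Vof A.S C.F = 1) :
    -- S_F is an algebra antihomomorphism
    SFmap A.S Vinv (Vof A.S C.F) 1 = 1 ∧
    (∀ g h : H, SFmap A.S Vinv (Vof A.S C.F) (g * h)
        = SFmap A.S Vinv (Vof A.S C.F) h * SFmap A.S Vinv (Vof A.S C.F) g) ∧
    -- S_F is invertible with the stated inverse
    (∀ h : H, SFmap A.Sinv (A.Sinv Vinv) (A.Sinv (Vof A.S C.F))
        (SFmap A.S Vinv (Vof A.S C.F) h) = h) ∧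
    (∀ h : H, SFmap A.S Vinv (Vof A.S C.F)
        (SFmap A.Sinv (A.Sinv Vinv) (A.Sinv (Vof A.S C.F)) h) = h) ∧
    -- S_F ∘ β_F = α_F
    (∀ r : R, SFmap A.S Vinv (Vof A.S C.F) (C.betaF r) = C.alphaF r) ∧
    -- left antipode axiom for H_F
    (∀ h : H, sandL C.ΔF (SFmap A.S Vinv (Vof A.S C.F)) 1 (C.ΔF h)
        - (1 : H) ⊗ₜ[k] SFmap A.S Vinv (Vof A.S C.F) h ∈ C.iRF) ∧
    -- right antipode axiom for H_F (for the inverse antipode)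
    (∀ h : H, sandR C.ΔF (SFmap A.Sinv (A.Sinv Vinv) (A.Sinv (Vof A.S C.F))) 1 (C.ΔF h)
        - (SFmap A.Sinv (A.Sinv Vinv) (A.Sinv (Vof A.S C.F)) h) ⊗ₜ[k] (1 : H) ∈ C.iRF) :=
  ⟨A.SFmap_one hV2, A.SFmap_mul hV1, A.SFmap_Sinv_SFmap hV1, A.SFmap_SFmap_Sinv hV2,
    A.SFmap_betaF C hV2, fun h => SModEq.sub_mem.mp (A.twisted_left_axiom C hV1 hV2 h),
    A.twisted_right_axiom C hV1 hV2⟩
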